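/- arXiv:2312.03438 — 6 statements merged into one kernel-verified Lean document; each statement's English description precedes it below -/
import Mathlib

section
/- Let X ∈ St(d,K) and A: ℝ^{d×K} → ℝ^{d×K}. If A(X) = XB for some symmetric positive semidefinite matrix B ∈ ℝ^{K×K}, then tr(Xᵀ A(X)) = ‖A(X)‖_* (the nuclear norm of A(X)). -/
open Matrix

/-- Nuclear norm: sum of singular values, i.e. sum of square roots of the
eigenvalues of `Aᴴ * A`. -/
noncomputable def nuclearNorm {d K : ℕ} (A : Matrix (Fin d) (Fin K) ℝ) : ℝ :=
  ∑ i, Real.sqrt ((Matrix.isHermitian_conjTranspose_mul_self A).eigenvalues i)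

lemma eigenvalues_congr {K : ℕ} {M N : Matrix (Fin K) (Fin K) ℝ} (h : M = N)
    (hM : M.IsHermitian) (hN : N.IsHermitian) : hM.eigenvalues = hN.eigenvalues := by
  subst h; rfl

lemma trace_sqrt_eq_sum_sqrt_eigenvalues {K : ℕ} {M : Matrix (Fin K) (Fin K) ℝ}
    (hM : M.PosSemidef) :
    (cfc Real.sqrt M).trace = ∑ i, Real.sqrt (hM.1.eigenvalues i) := by
  rw [hM.1.cfc_eq, IsHermitian.cfc, Unitary.conjStarAlgAut_apply, trace_mul_cycle, Unitary.coe_star_mul_self, one_mul,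
    trace_diagonal]
  rfl

/-- Fixed-point characterization ('only if' direction): if `X ∈ St(d,K)` and
`A(X) = X B` with `B` symmetric positive semidefinite, then
`tr(Xᵀ A(X)) = ‖A(X)‖₊`. -/
theorem trace_eq_nuclearNorm_of_psd_factor {d K : ℕ} (hdK : d > K)
    (A : Matrix (Fin d) (Fin K) ℝ → Matrix (Fin d) (Fin K) ℝ)
    (X : Matrix (Fin d) (Fin K) ℝ) (hX : Xᵀ * X = 1)
    (B : Matrix (Fin K) (Fin K) ℝ) (hB : B.PosSemidef)
    (hAX : A X = X * B) :
    (Xᵀ * A X).trace = nuclearNorm (A X) := by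
  have hsq : B ^ 2 = B * B := sq B
  have hB2 : (B ^ 2).PosSemidef := hB.pow 2
  have hMN : (A X)ᴴ * (A X) = B ^ 2 := by
    rw [hAX, conjTranspose_mul, hB.1, Matrix.mul_assoc, ← Matrix.mul_assoc (X)ᴴ,
      show (X)ᴴ = Xᵀ from rfl, hX, Matrix.one_mul, sq]
  have h1 : nuclearNorm (A X) = B.trace := by
    rw [nuclearNorm, eigenvalues_congr hMN (Matrix.isHermitian_conjTranspose_mul_self (A X)) hB2.1,
      ← trace_sqrt_eq_sum_sqrt_eigenvalues hB2,
      show cfc Real.sqrt (B ^ 2) = B by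
        open scoped MatrixOrder in
        rw [← cfcₙ_eq_cfc (hf0 := by simp), ← CFC.sqrt_eq_real_sqrt _ hB2.nonneg, CFC.sqrt_sq B hB.nonneg]]
  rw [h1, hAX, ← Matrix.mul_assoc, hX, Matrix.one_mul]
end

section
/- Let Q ∈ St(d,K), Θ² = diag(λ₁,…,λ_K) with λ₁ > ⋯ > λ_K > 0, and a = (a₁,…,a_K) with a₁ > ⋯ > a_K > 0. If X ∈ St(d,K) satisfies Q Θ² Qᵀ X diag(a) = X S for some symmetric matrix S, then X ᵀ Q Θ² Qᵀ X is a diagonal matrix. -/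
open Matrix

/-- Critical points of QPOC: if `Q Θ² Qᵀ X diag(a) = X S` for a symmetric `S`,
then `Xᵀ Q Θ² Qᵀ X` is diagonal. -/
theorem critical_point_diag {d K : ℕ} (hdK : d > K)
    (Q X : Matrix (Fin d) (Fin K) ℝ) (hQ : Qᵀ * Q = 1) (hX : Xᵀ * X = 1)
    (lam a : Fin K → ℝ) (hlam : StrictAnti lam) (hlampos : ∀ k, 0 < lam k)
    (ha : StrictAnti a) (hapos : ∀ k, 0 < a k)
    (S : Matrix (Fin K) (Fin K) ℝ) (hS : Sᵀ = S)
    (hcrit : Q * Matrix.diagonal lam * Qᵀ * X * Matrix.diagonal a = X * S) :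
    (Xᵀ * (Q * Matrix.diagonal lam * Qᵀ) * X).IsDiag := by
  set M := Xᵀ * (Q * Matrix.diagonal lam * Qᵀ) * X with hM
  have hMsym : Mᵀ = M := by
    simp [hM, Matrix.transpose_mul, Matrix.diagonal_transpose, Matrix.mul_assoc]
  have hMS : M * Matrix.diagonal a = S := by
    have := congrArg (fun Y => Xᵀ * Y) hcrit
    simpa [hM, Matrix.mul_assoc, ← Matrix.mul_assoc Xᵀ X S, hX] using this
  have hcomm : M * Matrix.diagonal a = Matrix.diagonal a * M := by
    calc M * Matrix.diagonal a = S := hMS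
    _ = Sᵀ := hS.symm
    _ = (M * Matrix.diagonal a)ᵀ := by rw [hMS]
    _ = Matrix.diagonal a * M := by
        rw [Matrix.transpose_mul, Matrix.diagonal_transpose, hMsym]
  intro i j hij
  have h := congrFun (congrFun hcomm i) j
  simp [Matrix.mul_apply, Matrix.diagonal, Finset.sum_ite_eq, Finset.sum_ite_eq'] at h
  have hne : a j ≠ a i := fun he => hij (ha.injective he.symm)
  have hz : M i j * (a j - a i) = 0 := by ring_nf; linarith [h]
  rcases mul_eq_zero.mp hz with h' | h'
  · exact h'
  · exact absurd (sub_eq_zero.mp h') hne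
end

section
/- Let λ₁ > ⋯ > λ_K > 0 and a₁ > ⋯ > a_K > 0. For any X ∈ St(d,K) and Q ∈ St(d,K) with Θ² = diag(λ₁,…,λ_K), one has tr(Xᵀ Q Θ² Qᵀ X diag(a)) ≤ Σ_{k=1}^K λ_k a_k, with equality attained at X = Q. -/
/-!
With `M = Qᵀ X`, the objective equals `∑ i k, λ i a k (M i k)²`. Since `Q` and `X` have
orthonormal columns, `M` is a contraction, so the matrix `(M i k)²` is doubly substochastic.
Against such a matrix the bilinear form of two antitone nonnegative sequences is at most
`∑ k, λ k a k`: the prefix sums of `i ↦ ∑ k, a k (M i k)²` are dominated by those of `a`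
(compare with the threshold `a j`), and Abel summation against the antitone weights `λ`
turns this weak majorization into the inequality.
-/

open Matrix Finset

theorem Finset.sum_mul_nonneg_of_prefix_sum_nonneg {ι : Type*} [LinearOrder ι] (s : Finset ι)
    {w d : ι → ℝ} (hw : AntitoneOn w s) (hw0 : ∀ i ∈ s, 0 ≤ w i)
    (hd : ∀ j ∈ s, 0 ≤ ∑ i ∈ s with i ≤ j, d i) :
    0 ≤ ∑ i ∈ s, w i * d i := by
  induction s using Finset.induction_on_max generalizing w with
  | empty => simp
  | insert m s hlt ih =>
    -- subtract the weight `w m` of the largest index and recurse on `s`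
    have hm : m ∉ s := fun h => lt_irrefl m (hlt m h)
    have hsplit : ∑ i ∈ insert m s, w i * d i
        = ∑ i ∈ s, (w i - w m) * d i + w m * ∑ i ∈ insert m s, d i := by
      simp only [sum_insert hm, sub_mul, sum_sub_distrib, mul_add, mul_sum]
      ring
    have hprefix : ∀ j ∈ s, ∑ i ∈ s with i ≤ j, d i = ∑ i ∈ insert m s with i ≤ j, d i := by
      intro j hj
      rw [filter_insert, if_neg (not_le.2 (hlt j hj))]
    have htotal : ∑ i ∈ insert m s, d i = ∑ i ∈ insert m s with i ≤ m, d i := by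
      refine (sum_filter_of_ne fun i hi _ => ?_).symm
      rcases mem_insert.1 hi with rfl | hi
      · exact le_rfl
      · exact (hlt i hi).le
    rw [hsplit]
    refine add_nonneg (ih (fun i hi j hj hij => ?_) (fun i hi => ?_) (fun j hj => ?_)) ?_
    · exact sub_le_sub_right (hw (mem_insert_of_mem hi) (mem_insert_of_mem hj) hij) _
    · exact sub_nonneg.2 (hw (mem_insert_of_mem hi) (mem_insert_self m s) (hlt i hi).le)
    · rw [hprefix j hj]; exact hd j (mem_insert_of_mem hj)
    · rw [htotal]; exact mul_nonneg (hw0 m (mem_insert_self m s)) (hd m (mem_insert_self m s))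

theorem Finset.sum_mul_le_sum_filter_le {ι : Type*} [LinearOrder ι] (s : Finset ι)
    {a q : ι → ℝ} (ha : AntitoneOn a s) {j : ι} (hj : j ∈ s) (ha0 : 0 ≤ a j)
    (hq0 : ∀ k ∈ s, 0 ≤ q k) (hq1 : ∀ k ∈ s, q k ≤ 1)
    (hq : ∑ k ∈ s, q k ≤ #{k ∈ s | k ≤ j}) :
    ∑ k ∈ s, a k * q k ≤ ∑ k ∈ s with k ≤ j, a k := by
  set e : ι → ℝ := fun k => if k ≤ j then 1 else 0
  have hsplit : ∀ k, (if k ≤ j then a k else 0) - a k * q k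
      = (a k - a j) * (e k - q k) + a j * (e k - q k) := by
    intro k; simp only [e]; split_ifs <;> ring
  have hcard : ∑ k ∈ s, (e k - q k) = #{k ∈ s | k ≤ j} - ∑ k ∈ s, q k := by
    rw [sum_sub_distrib, sum_boole]
  rw [← sub_nonneg, sum_filter, ← sum_sub_distrib, sum_congr rfl fun k _ => hsplit k,
    sum_add_distrib, ← mul_sum, hcard]
  refine add_nonneg (sum_nonneg fun k hk => ?_) (mul_nonneg ha0 (sub_nonneg.2 hq))
  rcases le_or_gt k j with hkj | hjk
  · have : e k = 1 := if_pos hkj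
    rw [this]
    exact mul_nonneg (sub_nonneg.2 (ha hk hj hkj)) (sub_nonneg.2 (hq1 k hk))
  · have : e k = 0 := if_neg (not_le.2 hjk)
    rw [this, zero_sub]
    exact mul_nonneg_of_nonpos_of_nonpos (sub_nonpos.2 (ha hj hk hjk.le))
      (neg_nonpos.2 (hq0 k hk))

theorem sum_sum_mul_mul_le_sum_mul_of_substochastic {ι : Type*} [Fintype ι] [LinearOrder ι]
    {lam a : ι → ℝ} (hlam : Antitone lam) (hlam0 : ∀ i, 0 ≤ lam i)
    (ha : Antitone a) (ha0 : ∀ k, 0 ≤ a k) {p : ι → ι → ℝ} (hp0 : ∀ i k, 0 ≤ p i k)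
    (hrow : ∀ i, ∑ k, p i k ≤ 1) (hcol : ∀ k, ∑ i, p i k ≤ 1) :
    ∑ i, ∑ k, lam i * a k * p i k ≤ ∑ i, lam i * a i := by
  have hprefix : ∀ j, ∑ i with i ≤ j, ∑ k, a k * p i k ≤ ∑ i with i ≤ j, a i := by
    intro j
    rw [sum_comm]
    simp only [← mul_sum]
    refine sum_mul_le_sum_filter_le univ (ha.antitoneOn _) (mem_univ j) (ha0 j)
      (fun k _ => sum_nonneg fun i _ => hp0 i k)
      (fun k _ => (sum_le_sum_of_subset_of_nonneg (filter_subset _ _)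
        fun i _ _ => hp0 i k).trans (hcol k)) ?_
    calc ∑ k, ∑ i with i ≤ j, p i k = ∑ i with i ≤ j, ∑ k, p i k := sum_comm
      _ ≤ ∑ i with i ≤ j, (1 : ℝ) := sum_le_sum fun i _ => hrow i
      _ = #{i | i ≤ j} := by simp
  have key := sum_mul_nonneg_of_prefix_sum_nonneg univ (hlam.antitoneOn _) (fun i _ => hlam0 i)
    (d := fun i => a i - ∑ k, a k * p i k)
    (fun j _ => by rw [sum_sub_distrib]; exact sub_nonneg.2 (hprefix j))
  simp only [mul_sub, sum_sub_distrib, sub_nonneg, mul_sum, ← mul_assoc] at key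
  exact key

theorem Matrix.sum_sq_transpose_mul_apply_le_one {m n p : Type*} [Fintype m] [Fintype n]
    [DecidableEq n] [DecidableEq p] {Q : Matrix m n ℝ} {X : Matrix m p ℝ}
    (hQ : Qᵀ * Q = 1) (hX : Xᵀ * X = 1) (k : p) :
    ∑ i, (Qᵀ * X) i k ^ 2 ≤ 1 := by
  set M := Qᵀ * X
  -- `1 - Mᵀ M` is the Gram matrix of the residual `X - Q M`
  have hMt : Xᵀ * Q = Mᵀ := by rw [transpose_mul, transpose_transpose]
  have hres : (X - Q * M)ᵀ * (X - Q * M) = 1 - Mᵀ * M := by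
    rw [transpose_sub, transpose_mul, Matrix.sub_mul, Matrix.mul_sub, Matrix.mul_sub, hX,
      ← Matrix.mul_assoc, hMt, Matrix.mul_assoc, Matrix.mul_assoc, ← Matrix.mul_assoc Qᵀ, hQ,
      Matrix.one_mul]
    abel
  have hdiag := congrFun (congrFun hres k) k
  simp only [mul_apply, transpose_apply, sub_apply, one_apply_eq] at hdiag
  simp only [sq]
  rw [← sub_nonneg, ← hdiag]
  exact sum_nonneg fun j _ => mul_self_nonneg _

theorem Matrix.trace_transpose_mul_diagonal_mul_mul_diagonal {R m n : Type*} [CommRing R]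
    [Fintype m] [Fintype n] [DecidableEq m] [DecidableEq n]
    (M : Matrix m n R) (lam : m → R) (a : n → R) :
    (Mᵀ * diagonal lam * M * diagonal a).trace = ∑ i, ∑ k, lam i * a k * M i k ^ 2 := by
  rw [sum_comm]
  refine sum_congr rfl fun k _ => ?_
  rw [diag_apply, mul_diagonal, mul_apply, sum_mul]
  refine sum_congr rfl fun i _ => ?_
  rw [mul_diagonal, transpose_apply]
  ring

theorem qpoc_optimal_value_general {d K : ℕ}
    (lam a : Fin K → ℝ) (hlam : StrictAnti lam) (hlampos : ∀ k, 0 < lam k)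
    (ha : StrictAnti a) (hapos : ∀ k, 0 < a k)
    (Q : Matrix (Fin d) (Fin K) ℝ) (hQ : Qᵀ * Q = 1) :
    (∀ X : Matrix (Fin d) (Fin K) ℝ, Xᵀ * X = 1 →
      (Xᵀ * (Q * Matrix.diagonal lam * Qᵀ) * X * Matrix.diagonal a).trace ≤
        ∑ k, lam k * a k) ∧
    (Qᵀ * (Q * Matrix.diagonal lam * Qᵀ) * Q * Matrix.diagonal a).trace =
      ∑ k, lam k * a k := by
  refine ⟨fun X hX => ?_, ?_⟩
  · have hconj : Xᵀ * (Q * diagonal lam * Qᵀ) * X = (Qᵀ * X)ᵀ * diagonal lam * (Qᵀ * X) := by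
      simp only [transpose_mul, transpose_transpose, Matrix.mul_assoc]
    rw [hconj, trace_transpose_mul_diagonal_mul_mul_diagonal]
    refine sum_sum_mul_mul_le_sum_mul_of_substochastic hlam.antitone (fun i => (hlampos i).le) ha.antitone
      (fun k => (hapos k).le) (fun i k => sq_nonneg _) (fun i => ?_)
      (sum_sq_transpose_mul_apply_le_one hQ hX)
    simpa only [← transpose_apply (Qᵀ * X), transpose_mul, transpose_transpose]
      using sum_sq_transpose_mul_apply_le_one hX hQ i
  · have hconj : Qᵀ * (Q * diagonal lam * Qᵀ) * Q = diagonal lam := by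
      simp only [← Matrix.mul_assoc, hQ, Matrix.one_mul]
      rw [Matrix.mul_assoc, hQ, Matrix.mul_one]
    rw [hconj, diagonal_mul_diagonal, trace_diagonal]

/-- Optimal value of QPOC: `tr(Xᵀ Q Θ² Qᵀ X diag(a)) ≤ Σ_k λ_k a_k` for every
`X ∈ St(d,K)`, with equality attained at `X = Q`. -/
theorem qpoc_optimal_value {d K : ℕ} (hdK : d > K)
    (lam a : Fin K → ℝ) (hlam : StrictAnti lam) (hlampos : ∀ k, 0 < lam k)
    (ha : StrictAnti a) (hapos : ∀ k, 0 < a k)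
    (Q : Matrix (Fin d) (Fin K) ℝ) (hQ : Qᵀ * Q = 1) :
    (∀ X : Matrix (Fin d) (Fin K) ℝ, Xᵀ * X = 1 →
      (Xᵀ * (Q * Matrix.diagonal lam * Qᵀ) * X * Matrix.diagonal a).trace ≤
        ∑ k, lam k * a k) ∧
    (Qᵀ * (Q * Matrix.diagonal lam * Qᵀ) * Q * Matrix.diagonal a).trace =
      ∑ k, lam k * a k :=
  qpoc_optimal_value_general lam a hlam hlampos ha hapos Q hQ
end

section
/- Let Q ∈ St(d,K) and suppose X = [B, b] ∈ St(d,K) where the columns of B lie in the column space of Q and b lies in the orthogonal complement of the column space of Q (i.e., Qᵀb = 0). Then for g(X) = tr(Xᵀ Q Θ² Qᵀ X diag(a)) with λ₁ > ⋯ > λ_K > 0 and a₁ > ⋯ > a_K > 0, one has g(X) < Σ_{k=1}^K λ_k a_k. -/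
open Matrix

open Finset


lemma ind_sum (s : Finset ℕ) (p : ℕ) (c : ℝ) (f : ℕ → ℝ) :
    ∑ i ∈ s, (if i ≤ p then c else 0) * f i = c * ∑ i ∈ s.filter (· ≤ p), f i := by
  rw [Finset.sum_filter, Finset.mul_sum]
  exact Finset.sum_congr rfl fun i _ => by split_ifs <;> ring

lemma tele (L : ℕ → ℝ) (i K : ℕ) (h : i ≤ K) :
    ∑ p ∈ Finset.Ico i K, (L p - L (p+1)) = L i - L K := by
  rw [Finset.sum_Ico_eq_sum_range]
  have := Finset.sum_range_sub' (fun j => L (i + j)) (K - i)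
  simpa [Nat.add_sub_cancel' h, Nat.add_assoc] using this

lemma filter_le_range (K p : ℕ) (hp : p < K) :
    (Finset.range K).filter (· ≤ p) = Finset.range (p+1) := by
  ext k; simp only [Finset.mem_filter, Finset.mem_range]; omega

lemma expand_coef (K : ℕ) (L : ℕ → ℝ) (hLK : L K = 0) (i : ℕ) (hi : i < K) :
    L i = ∑ p ∈ Finset.range K, (if i ≤ p then L p - L (p+1) else 0) := by
  rw [← Finset.sum_filter]
  have : (Finset.range K).filter (fun p => i ≤ p) = Finset.Ico i K := by
    ext k; simp only [Finset.mem_filter, Finset.mem_range, Finset.mem_Ico]; omega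
  rw [this, tele L i K hi.le, hLK, sub_zero]

lemma abel_lt (K : ℕ) (hK : 0 < K) (L A : ℕ → ℝ) (S : ℕ → ℕ → ℝ)
    (hLK : L K = 0) (hAK : A K = 0)
    (hLd : ∀ p, L (p+1) ≤ L p) (hAd : ∀ q, A (q+1) ≤ A q)
    (hLlast : 0 < L (K-1)) (hAlast : 0 < A (K-1))
    (hS : ∀ i j, 0 ≤ S i j)
    (hrow : ∀ i, ∑ j ∈ range K, S i j ≤ 1)
    (hcol : ∀ j, ∑ i ∈ range K, S i j ≤ 1)
    (j₀ : ℕ) (hj₀K : j₀ < K) (hj₀ : ∀ i, S i j₀ = 0) :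
    ∑ i ∈ range K, ∑ j ∈ range K, L i * A j * S i j < ∑ k ∈ range K, L k * A k := by
  set δ : ℕ → ℝ := fun p => L p - L (p+1) with hδdef
  set ε : ℕ → ℝ := fun q => A q - A (q+1) with hεdef
  have hδ : ∀ p, 0 ≤ δ p := fun p => sub_nonneg.2 (hLd p)
  have hε : ∀ q, 0 ≤ ε q := fun q => sub_nonneg.2 (hAd q)
  set P : Finset (ℕ × ℕ) := range K ×ˢ range K with hP
  -- U and N
  set U : ℕ → ℕ → ℝ := fun p q =>
    ∑ i ∈ (range K).filter (· ≤ p), ∑ j ∈ (range K).filter (· ≤ q), S i j with hU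
  -- LHS rewrite
  have hLHS : ∑ i ∈ range K, ∑ j ∈ range K, L i * A j * S i j
      = ∑ w ∈ P, δ w.1 * (ε w.2 * U w.1 w.2) := by
    have step1 : ∑ i ∈ range K, ∑ j ∈ range K, L i * A j * S i j
        = ∑ z ∈ P, ∑ w ∈ P, (if z.1 ≤ w.1 then δ w.1 else 0) *
            ((if z.2 ≤ w.2 then ε w.2 else 0) * S z.1 z.2) := by
      rw [Finset.sum_product]
      refine Finset.sum_congr rfl fun i hi => Finset.sum_congr rfl fun j hj => ?_
      rw [Finset.mem_range] at hi hj
      rw [expand_coef K L hLK i hi, expand_coef K A hAK j hj, Finset.sum_product]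
      rw [Finset.sum_mul_sum, Finset.sum_mul]
      refine Finset.sum_congr rfl fun p _ => ?_
      rw [Finset.sum_mul]
      refine Finset.sum_congr rfl fun q _ => ?_
      split_ifs <;> ring
    rw [step1, Finset.sum_comm]
    refine Finset.sum_congr rfl fun w hw => ?_
    rw [Finset.sum_product]
    calc ∑ i ∈ range K, ∑ j ∈ range K,
          (if i ≤ w.1 then δ w.1 else 0) * ((if j ≤ w.2 then ε w.2 else 0) * S i j)
        = ∑ i ∈ range K, (if i ≤ w.1 then δ w.1 else 0) *
            (ε w.2 * ∑ j ∈ (range K).filter (· ≤ w.2), S i j) := by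
          refine Finset.sum_congr rfl fun i _ => ?_
          rw [← Finset.mul_sum]
          congr 1
          exact ind_sum _ _ _ _
      _ = δ w.1 * ∑ i ∈ (range K).filter (· ≤ w.1),
            ε w.2 * ∑ j ∈ (range K).filter (· ≤ w.2), S i j := ind_sum _ _ _ _
      _ = δ w.1 * (ε w.2 * U w.1 w.2) := by rw [hU, ← Finset.mul_sum]
  -- RHS rewrite
  set N : ℕ → ℕ → ℕ := fun p q => ((range K).filter (fun k => k ≤ p ∧ k ≤ q)).card with hN
  have hRHS : ∑ k ∈ range K, L k * A k = ∑ w ∈ P, δ w.1 * (ε w.2 * (N w.1 w.2 : ℝ)) := by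
    have step1 : ∑ k ∈ range K, L k * A k
        = ∑ k ∈ range K, ∑ w ∈ P, (if k ≤ w.1 then δ w.1 else 0) *
            (if k ≤ w.2 then ε w.2 else 0) := by
      refine Finset.sum_congr rfl fun k hk => ?_
      rw [Finset.mem_range] at hk
      rw [expand_coef K L hLK k hk, expand_coef K A hAK k hk, Finset.sum_mul_sum,
        Finset.sum_product]
    rw [step1, Finset.sum_comm]
    refine Finset.sum_congr rfl fun w hw => ?_
    have : ∀ k, (if k ≤ w.1 then δ w.1 else 0) * (if k ≤ w.2 then ε w.2 else 0)
        = if k ≤ w.1 ∧ k ≤ w.2 then δ w.1 * ε w.2 else 0 := by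
      intro k; by_cases h1 : k ≤ w.1 <;> by_cases h2 : k ≤ w.2 <;> simp [h1, h2]
    rw [Finset.sum_congr rfl fun k _ => this k, ← Finset.sum_filter, Finset.sum_const,
      nsmul_eq_mul]
    ring
  rw [hLHS, hRHS]
  -- bounds on U
  have hfilterq : ∀ q, q < K → ((range K).filter (· ≤ q)).card = q + 1 := by
    intro q hq; rw [filter_le_range K q hq, Finset.card_range]
  have hUrow : ∀ p q, p < K → U p q ≤ (p + 1 : ℝ) := by
    intro p q hp
    have h1 : ∀ i ∈ (range K).filter (· ≤ p),
        ∑ j ∈ (range K).filter (· ≤ q), S i j ≤ 1 := by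
      intro i _
      exact le_trans (Finset.sum_le_sum_of_subset_of_nonneg (Finset.filter_subset _ _)
        (fun j _ _ => hS i j)) (hrow i)
    calc U p q ≤ ∑ i ∈ (range K).filter (· ≤ p), (1:ℝ) := Finset.sum_le_sum h1
      _ = (p + 1 : ℝ) := by rw [Finset.sum_const, hfilterq p hp]; simp
  have hUcol : ∀ p q, U p q ≤ ∑ j ∈ (range K).filter (· ≤ q), (if j = j₀ then (0:ℝ) else 1) := by
    intro p q
    rw [hU]
    simp only
    rw [Finset.sum_comm]
    refine Finset.sum_le_sum fun j _ => ?_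
    by_cases hj : j = j₀
    · subst hj
      rw [if_pos rfl]
      exact le_of_eq (Finset.sum_eq_zero fun i _ => hj₀ i)
    · rw [if_neg hj]
      exact le_trans (Finset.sum_le_sum_of_subset_of_nonneg (Finset.filter_subset _ _)
        (fun i _ _ => hS i j)) (hcol j)
  have hUcol' : ∀ p q, q < K → U p q ≤ (q + 1 : ℝ) := by
    intro p q hq
    refine le_trans (hUcol p q) ?_
    calc ∑ j ∈ (range K).filter (· ≤ q), (if j = j₀ then (0:ℝ) else 1)
        ≤ ∑ j ∈ (range K).filter (· ≤ q), (1:ℝ) := by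
          refine Finset.sum_le_sum fun j _ => ?_; split_ifs <;> norm_num
      _ = (q + 1 : ℝ) := by rw [Finset.sum_const, hfilterq q hq]; simp
  -- N value
  have hNval : ∀ p q, p < K → q < K → N p q = min p q + 1 := by
    intro p q hp hq
    rw [hN]
    simp only
    have : (range K).filter (fun k => k ≤ p ∧ k ≤ q) = range (min p q + 1) := by
      ext k; simp only [Finset.mem_filter, Finset.mem_range]; omega
    rw [this, Finset.card_range]
  -- termwise comparison
  refine Finset.sum_lt_sum ?_ ?_
  · rintro ⟨p, q⟩ hw
    rw [hP, Finset.mem_product, Finset.mem_range, Finset.mem_range] at hw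
    obtain ⟨hp, hq⟩ := hw
    have hUN : U p q ≤ (N p q : ℝ) := by
      rw [hNval p q hp hq]
      push_cast [Nat.cast_min]
      rw [← min_add_add_right]
      exact le_min (hUrow p q hp) (hUcol' p q hq)
    exact mul_le_mul_of_nonneg_left (mul_le_mul_of_nonneg_left hUN (hε q)) (hδ p)
  · refine ⟨(K-1, K-1), ?_, ?_⟩
    · simp only [hP, Finset.mem_product, Finset.mem_range]
      omega
    · have hK1 : K - 1 + 1 = K := Nat.succ_pred_eq_of_pos hK
      have hδpos : 0 < δ (K-1) := by
        show 0 < L (K-1) - L (K-1+1)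
        rw [hK1, hLK, sub_zero]; exact hLlast
      have hεpos : 0 < ε (K-1) := by
        show 0 < A (K-1) - A (K-1+1)
        rw [hK1, hAK, sub_zero]; exact hAlast
      have hUlt : U (K-1) (K-1) < (N (K-1) (K-1) : ℝ) := by
        have hNK : N (K-1) (K-1) = K := by
          rw [hNval (K-1) (K-1) (by omega) (by omega)]; omega
        have hflt : ((range K).filter (· ≤ K-1)) = range K := by
          ext k; simp only [Finset.mem_filter, Finset.mem_range]; omega
        have hsum : ∑ j ∈ (range K).filter (· ≤ K-1), (if j = j₀ then (0:ℝ) else 1)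
            = (K:ℝ) - 1 := by
          rw [hflt]
          have : ∀ j ∈ range K, (if j = j₀ then (0:ℝ) else 1)
              = 1 - (if j = j₀ then (1:ℝ) else 0) := by
            intro j _; split_ifs <;> ring
          rw [Finset.sum_congr rfl this, Finset.sum_sub_distrib, Finset.sum_const,
            Finset.sum_ite_eq' (range K) j₀ (fun _ => (1:ℝ)),
            if_pos (Finset.mem_range.2 hj₀K)]
          simp
        calc U (K-1) (K-1) ≤ (K:ℝ) - 1 := hsum ▸ hUcol (K-1) (K-1)
          _ < (N (K-1) (K-1) : ℝ) := by rw [hNK]; linarith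
      exact mul_lt_mul_of_pos_left (mul_lt_mul_of_pos_left hUlt hεpos) hδpos

lemma iso_mulVec {d K : ℕ} (Q : Matrix (Fin d) (Fin K) ℝ) (hQ : Qᵀ * Q = 1)
    (c : Fin K → ℝ) : (Q *ᵥ c) ⬝ᵥ (Q *ᵥ c) = c ⬝ᵥ c := by
  calc (Q *ᵥ c) ⬝ᵥ (Q *ᵥ c) = ((Q *ᵥ c) ᵥ* Q) ⬝ᵥ c := Matrix.dotProduct_mulVec _ _ _
    _ = (Qᵀ *ᵥ (Q *ᵥ c)) ⬝ᵥ c := by rw [Matrix.mulVec_transpose]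
    _ = c ⬝ᵥ c := by rw [Matrix.mulVec_mulVec, hQ, Matrix.one_mulVec]

lemma rowsum_le {d K : ℕ} (X : Matrix (Fin d) (Fin K) ℝ) (hX : Xᵀ * X = 1)
    (u : Fin d → ℝ) : (Xᵀ *ᵥ u) ⬝ᵥ (Xᵀ *ᵥ u) ≤ u ⬝ᵥ u := by
  set w : Fin K → ℝ := Xᵀ *ᵥ u with hw
  have h1 : w ⬝ᵥ w = u ⬝ᵥ (X *ᵥ w) := by
    rw [hw]
    nth_rewrite 1 [Matrix.mulVec_transpose]
    rw [← Matrix.dotProduct_mulVec]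
  have h2 : (X *ᵥ w) ⬝ᵥ (X *ᵥ w) = w ⬝ᵥ w := iso_mulVec X hX w
  have hCS : (u ⬝ᵥ (X *ᵥ w)) ^ 2 ≤ (u ⬝ᵥ u) * ((X *ᵥ w) ⬝ᵥ (X *ᵥ w)) := by
    have := Finset.sum_mul_sq_le_sq_mul_sq Finset.univ u (X *ᵥ w)
    simpa [dotProduct, sq] using this
  have hw0 : 0 ≤ w ⬝ᵥ w := Finset.sum_nonneg fun i _ => mul_self_nonneg _
  have hu0 : 0 ≤ u ⬝ᵥ u := Finset.sum_nonneg fun i _ => mul_self_nonneg _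
  rw [h2, ← h1] at hCS
  by_contra hcon
  push_neg at hcon
  have hwpos : 0 < w ⬝ᵥ w := lt_of_le_of_lt hu0 hcon
  nlinarith

/-- If `X ∈ St(d,K)` has a column `j₀` lying in the orthogonal complement of the
column space of `Q` (i.e. `Qᵀ x_{j₀} = 0`) while every other column lies in the
column space of `Q`, then `g(X) = tr(Xᵀ Q Θ² Qᵀ X diag(a)) < Σ_k λ_k a_k`. -/
theorem column_in_complement_suboptimal {d K : ℕ} (hdK : d > K)
    (lam a : Fin K → ℝ) (hlam : StrictAnti lam) (hlampos : ∀ k, 0 < lam k)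
    (ha : StrictAnti a) (hapos : ∀ k, 0 < a k)
    (Q X : Matrix (Fin d) (Fin K) ℝ) (hQ : Qᵀ * Q = 1) (hX : Xᵀ * X = 1)
    (j₀ : Fin K)
    (hb : ∀ i : Fin K, (Qᵀ * X) i j₀ = 0)
    (hB : ∀ j : Fin K, j ≠ j₀ → ∃ c : Fin K → ℝ,
      (fun i => X i j) = Q.mulVec c) :
    (Xᵀ * (Q * Matrix.diagonal lam * Qᵀ) * X * Matrix.diagonal a).trace <
      ∑ k, lam k * a k := by
  have hK : 0 < K := j₀.pos
  set M := Qᵀ * X with hM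
  -- row sums
  have rowsum : ∀ i : Fin K, ∑ j : Fin K, (M i j)^2 ≤ 1 := by
    intro i
    have h1 : (fun j => M i j) = Xᵀ *ᵥ (fun k => Q k i) := by
      funext j
      simp only [hM, Matrix.mul_apply, Matrix.mulVec, dotProduct,
        Matrix.transpose_apply]
      exact Finset.sum_congr rfl fun k _ => mul_comm _ _
    have h2 : ∑ j : Fin K, (M i j)^2 = (fun j => M i j) ⬝ᵥ (fun j => M i j) := by
      simp [dotProduct, sq]
    have h3 : (fun k => Q k i) ⬝ᵥ (fun k => Q k i) = (1 : Matrix (Fin K) (Fin K) ℝ) i i := by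
      rw [← hQ]
      simp [Matrix.mul_apply, dotProduct, Matrix.transpose_apply]
    rw [h2, h1]
    refine le_trans (rowsum_le X hX _) ?_
    rw [h3, Matrix.one_apply_eq]
  -- column sums
  have colsum : ∀ j : Fin K, j ≠ j₀ → ∑ i : Fin K, (M i j)^2 = 1 := by
    intro j hj
    obtain ⟨c, hc⟩ := hB j hj
    have hcolM : (fun i => M i j) = c := by
      have step : (fun i => M i j) = Qᵀ *ᵥ (Q *ᵥ c) := by
        funext i
        simp only [hM, Matrix.mul_apply, Matrix.mulVec, dotProduct]
        exact Finset.sum_congr rfl fun k _ => by rw [congrFun hc k]; rfl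
      rw [step, Matrix.mulVec_mulVec, hQ, Matrix.one_mulVec]
    have hXcol : (fun k => X k j) ⬝ᵥ (fun k => X k j) = 1 := by
      have : (fun k => X k j) ⬝ᵥ (fun k => X k j) = (Xᵀ * X) j j := by
        simp [Matrix.mul_apply, dotProduct, Matrix.transpose_apply]
      rw [this, hX, Matrix.one_apply_eq]
    have : ∑ i : Fin K, (M i j)^2 = c ⬝ᵥ c := by
      simp only [dotProduct]
      exact Finset.sum_congr rfl fun i _ => by rw [congrFun hcolM i, sq]
    rw [this, ← iso_mulVec Q hQ c]
    rw [show Q *ᵥ c = fun k => X k j from hc.symm]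
    exact hXcol
  -- trace formula
  have htr : (Xᵀ * (Q * Matrix.diagonal lam * Qᵀ) * X * Matrix.diagonal a).trace
      = ∑ j : Fin K, ∑ i : Fin K, lam i * a j * (M i j)^2 := by
    have hassoc : Xᵀ * (Q * Matrix.diagonal lam * Qᵀ) * X * Matrix.diagonal a
        = Mᵀ * Matrix.diagonal lam * M * Matrix.diagonal a := by
      rw [hM, Matrix.transpose_mul, Matrix.transpose_transpose]
      simp only [Matrix.mul_assoc]
    rw [hassoc, Matrix.trace]
    refine Finset.sum_congr rfl fun j _ => ?_
    rw [Matrix.diag_apply, Matrix.mul_diagonal, Matrix.mul_apply, Finset.sum_mul]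
    refine Finset.sum_congr rfl fun i _ => ?_
    rw [Matrix.mul_diagonal, Matrix.transpose_apply]
    ring
  -- set up ℕ-indexed data
  set Lf : ℕ → ℝ := fun n => if h : n < K then lam ⟨n, h⟩ else 0 with hLf
  set Af : ℕ → ℝ := fun n => if h : n < K then a ⟨n, h⟩ else 0 with hAf
  set Sf : ℕ → ℕ → ℝ := fun i j =>
    if h : i < K ∧ j < K then (M ⟨i, h.1⟩ ⟨j, h.2⟩)^2 else 0 with hSf
  have hLK : Lf K = 0 := dif_neg (lt_irrefl K)
  have hAK : Af K = 0 := dif_neg (lt_irrefl K)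
  have hLd : ∀ p, Lf (p+1) ≤ Lf p := by
    intro p
    by_cases h1 : p + 1 < K
    · have h0 : p < K := by omega
      rw [hLf]; simp only [dif_pos h1, dif_pos h0]
      exact hlam.antitone (by simp [Fin.le_def])
    · by_cases h0 : p < K
      · rw [hLf]; simp only [dif_neg h1, dif_pos h0]
        exact (hlampos _).le
      · rw [hLf]; simp only [dif_neg h1, dif_neg h0]; exact le_refl _
  have hAd : ∀ p, Af (p+1) ≤ Af p := by
    intro p
    by_cases h1 : p + 1 < K
    · have h0 : p < K := by omega
      rw [hAf]; simp only [dif_pos h1, dif_pos h0]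
      exact ha.antitone (by simp [Fin.le_def])
    · by_cases h0 : p < K
      · rw [hAf]; simp only [dif_neg h1, dif_pos h0]
        exact (hapos _).le
      · rw [hAf]; simp only [dif_neg h1, dif_neg h0]; exact le_refl _
  have hKK : K - 1 < K := by omega
  have hLlast : 0 < Lf (K-1) := by rw [hLf]; simp only [dif_pos hKK]; exact hlampos _
  have hAlast : 0 < Af (K-1) := by rw [hAf]; simp only [dif_pos hKK]; exact hapos _
  have hSnn : ∀ i j, 0 ≤ Sf i j := by
    intro i j; rw [hSf]; simp only
    split_ifs
    · exact sq_nonneg _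
    · exact le_refl _
  have hrow' : ∀ i, ∑ j ∈ Finset.range K, Sf i j ≤ 1 := by
    intro i
    by_cases hi : i < K
    · have heq : ∑ j ∈ Finset.range K, Sf i j = ∑ j : Fin K, (M ⟨i, hi⟩ j)^2 := by
        rw [← Fin.sum_univ_eq_sum_range (fun j => Sf i j) K]
        refine Finset.sum_congr rfl fun j _ => ?_
        simp [hSf, hi, j.isLt]
      rw [heq]; exact rowsum _
    · have heq : ∑ j ∈ Finset.range K, Sf i j = 0 := by
        refine Finset.sum_eq_zero fun j _ => ?_
        rw [hSf]; exact dif_neg (by tauto)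
      rw [heq]; norm_num
  have hcol' : ∀ j, ∑ i ∈ Finset.range K, Sf i j ≤ 1 := by
    intro j
    by_cases hj : j < K
    · have heq : ∑ i ∈ Finset.range K, Sf i j = ∑ i : Fin K, (M i ⟨j, hj⟩)^2 := by
        rw [← Fin.sum_univ_eq_sum_range (fun i => Sf i j) K]
        refine Finset.sum_congr rfl fun i _ => ?_
        simp [hSf, hj, i.isLt]
      rw [heq]
      by_cases hjj : (⟨j, hj⟩ : Fin K) = j₀
      · have : ∑ i : Fin K, (M i (⟨j, hj⟩ : Fin K))^2 = 0 := by
          refine Finset.sum_eq_zero fun i _ => ?_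
          rw [hjj, hb i]; norm_num
        rw [this]; norm_num
      · exact (colsum _ hjj).le
    · have heq : ∑ i ∈ Finset.range K, Sf i j = 0 := by
        refine Finset.sum_eq_zero fun i _ => ?_
        rw [hSf]; exact dif_neg (by tauto)
      rw [heq]; norm_num
  have hj₀' : ∀ i, Sf i (j₀ : ℕ) = 0 := by
    intro i
    by_cases hi : i < K
    · simp [hSf, hi, j₀.isLt, hb ⟨i, hi⟩]
    · rw [hSf]; exact dif_neg (by tauto)
  have hmain := abel_lt K hK Lf Af Sf hLK hAK hLd hAd hLlast hAlast hSnn hrow' hcol'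
    (j₀ : ℕ) j₀.isLt hj₀'
  -- convert sums
  have eLHS : ∑ i ∈ Finset.range K, ∑ j ∈ Finset.range K, Lf i * Af j * Sf i j
      = ∑ j : Fin K, ∑ i : Fin K, lam i * a j * (M i j)^2 := by
    calc ∑ i ∈ Finset.range K, ∑ j ∈ Finset.range K, Lf i * Af j * Sf i j
        = ∑ i : Fin K, ∑ j : Fin K, Lf i * Af j * Sf i j := by
          rw [← Fin.sum_univ_eq_sum_range (fun i => ∑ j ∈ Finset.range K, Lf i * Af j * Sf i j) K]
          exact Finset.sum_congr rfl fun i _ =>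
            (Fin.sum_univ_eq_sum_range (fun j => Lf i * Af j * Sf i j) K).symm
      _ = ∑ i : Fin K, ∑ j : Fin K, lam i * a j * (M i j)^2 :=
          Finset.sum_congr rfl fun i _ => Finset.sum_congr rfl fun j _ => by
            simp [hLf, hAf, hSf, i.isLt, j.isLt]
      _ = ∑ j : Fin K, ∑ i : Fin K, lam i * a j * (M i j)^2 := Finset.sum_comm
  have eRHS : ∑ k ∈ Finset.range K, Lf k * Af k = ∑ k : Fin K, lam k * a k := by
    rw [← Fin.sum_univ_eq_sum_range (fun k => Lf k * Af k) K]
    refine Finset.sum_congr rfl fun k _ => ?_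
    rw [hLf, hAf]; simp only [dif_pos k.isLt, Fin.eta]
  rw [htr, ← eLHS, ← eRHS]
  exact hmain
end

section
/- (Sufficient ascent of GPM) Let M ∈ ℝ^{d×d} be symmetric, α > 0, and define A_α(X) = αX + M X D where D is a diagonal positive matrix and M is positive semidefinite. For g(X) = tr(Xᵀ M X D), if X^{t+1} ∈ P_St(A_α(X^t)) (the projection of A_α(X^t) onto St(d,K)), then g(X^{t+1}) − g(X^t) ≥ α‖X^{t+1} − X^t‖_F². -/
/-!
Write `g(Z) = tr(ZᵀMZD)`. By symmetry of `M`,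
`g(Y) − g(X) = g(Y − X) + 2 tr(YᵀMXD) − 2 tr(XᵀMXD)`, and `g(Y − X) ≥ 0` since `M ⪰ 0` and
`D ≥ 0`. Comparing the maximizer `Y` with the feasible point `X` in the projection problem gives
`tr(YᵀMXD) − tr(XᵀMXD) ≥ α (tr(XᵀX) − tr(YᵀX))`, and for two Stiefel points
`‖Y − X‖² = 2 tr(XᵀX) − 2 tr(YᵀX)`.
-/

open Matrix

noncomputable def frobNorm {m n : ℕ} (A : Matrix (Fin m) (Fin n) ℝ) : ℝ :=
  Real.sqrt (∑ i, ∑ j, (A i j) ^ 2)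

theorem frobNorm_sq {m n : ℕ} (A : Matrix (Fin m) (Fin n) ℝ) :
    frobNorm A ^ 2 = (Aᵀ * A).trace := by
  rw [frobNorm, Real.sq_sqrt (by positivity), Finset.sum_comm]
  simp only [trace, diag_apply, mul_apply, transpose_apply, sq]

theorem frobNorm_sub_sq_of_transpose_mul_self_eq {m n : ℕ}
    {X Y : Matrix (Fin m) (Fin n) ℝ} (h : Yᵀ * Y = Xᵀ * X) :
    frobNorm (Y - X) ^ 2 = 2 * (Xᵀ * X).trace - 2 * (Yᵀ * X).trace := by
  have hcross : (Xᵀ * Y).trace = (Yᵀ * X).trace := by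
    rw [← trace_transpose, transpose_mul, transpose_transpose]
  rw [frobNorm_sq, transpose_sub, Matrix.sub_mul, Matrix.mul_sub, Matrix.mul_sub, trace_sub,
    trace_sub, trace_sub, h, hcross]
  ring

section

variable {m n R : Type*} [Fintype m] [Fintype n] [DecidableEq n]

theorem Matrix.trace_mul_diagonal [NonUnitalNonAssocSemiring R] (A : Matrix n n R) (d : n → R) :
    (A * diagonal d).trace = ∑ k, A k k * d k := by
  simp only [trace, diag_apply, mul_diagonal]

theorem Matrix.PosSemidef.trace_transpose_mul_mul_mul_diagonal_nonneg {M : Matrix m m ℝ}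
    (hM : M.PosSemidef) {d : n → ℝ} (hd : ∀ k, 0 ≤ d k) (Z : Matrix m n ℝ) :
    0 ≤ (Zᵀ * M * Z * diagonal d).trace := by
  rw [trace_mul_diagonal]
  exact Finset.sum_nonneg fun k _ =>
    mul_nonneg (hM.conjTranspose_mul_mul_same Z).diag_nonneg (hd k)

variable [CommRing R] {M : Matrix m m R}

theorem Matrix.IsSymm.trace_transpose_mul_mul_mul_diagonal_comm (hM : M.IsSymm) (d : n → R)
    (X Y : Matrix m n R) :
    (Xᵀ * M * Y * diagonal d).trace = (Yᵀ * M * X * diagonal d).trace := by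
  rw [← trace_transpose, trace_mul_comm]
  simp only [transpose_mul, diagonal_transpose, hM.eq, transpose_transpose, Matrix.mul_assoc]

theorem Matrix.IsSymm.trace_quadratic_sub (hM : M.IsSymm) (d : n → R) (X Y : Matrix m n R) :
    (Yᵀ * M * Y * diagonal d).trace - (Xᵀ * M * X * diagonal d).trace =
      ((Y - X)ᵀ * M * (Y - X) * diagonal d).trace + 2 * (Yᵀ * M * X * diagonal d).trace -
        2 * (Xᵀ * M * X * diagonal d).trace := by
  simp only [transpose_sub, Matrix.sub_mul, Matrix.mul_sub, trace_sub]
  rw [hM.trace_transpose_mul_mul_mul_diagonal_comm d X Y]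
  ring

end

theorem gpm_sufficient_ascent_general {d K : ℕ}
    (M : Matrix (Fin d) (Fin d) ℝ) (hM : M.PosSemidef)
    (dv : Fin K → ℝ) (hdv : ∀ k, 0 < dv k)
    (α : ℝ)
    (X Y : Matrix (Fin d) (Fin K) ℝ) (hX : Xᵀ * X = 1) (hY : Yᵀ * Y = 1)
    (hproj : ∀ Z : Matrix (Fin d) (Fin K) ℝ, Zᵀ * Z = 1 →
      (Zᵀ * (α • X + M * X * Matrix.diagonal dv)).trace ≤
        (Yᵀ * (α • X + M * X * Matrix.diagonal dv)).trace) :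
    (Yᵀ * M * Y * Matrix.diagonal dv).trace -
        (Xᵀ * M * X * Matrix.diagonal dv).trace ≥
      α * frobNorm (Y - X) ^ 2 := by
  have hgap := hM.trace_transpose_mul_mul_mul_diagonal_nonneg (fun k => (hdv k).le) (Y - X)
  have hascent := hproj X hX
  simp only [Matrix.mul_add, trace_add, Matrix.mul_smul, trace_smul, smul_eq_mul,
    ← Matrix.mul_assoc] at hascent
  rw [ge_iff_le, frobNorm_sub_sq_of_transpose_mul_self_eq (hY.trans hX.symm),
    (isHermitian_iff_isSymm.mp hM.isHermitian).trace_quadratic_sub]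
  linarith

/-- Sufficient ascent of GPM: with `M` symmetric positive semidefinite,
`D = diag(dv)` with positive diagonal, `α > 0`, and `X^{t+1}` a projection of
`A_α(X^t) = α X^t + M X^t D` onto the Stiefel manifold (i.e. a maximizer of
`Z ↦ tr(Zᵀ A_α(X^t))` over `St(d,K)`), we have
`g(X^{t+1}) − g(X^t) ≥ α ‖X^{t+1} − X^t‖_F²` for `g(X) = tr(Xᵀ M X D)`. -/
theorem gpm_sufficient_ascent {d K : ℕ}
    (M : Matrix (Fin d) (Fin d) ℝ) (hM : M.PosSemidef)
    (dv : Fin K → ℝ) (hdv : ∀ k, 0 < dv k)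
    (α : ℝ) (hα : 0 < α)
    (X Y : Matrix (Fin d) (Fin K) ℝ) (hX : Xᵀ * X = 1) (hY : Yᵀ * Y = 1)
    (hproj : ∀ Z : Matrix (Fin d) (Fin K) ℝ, Zᵀ * Z = 1 →
      (Zᵀ * (α • X + M * X * Matrix.diagonal dv)).trace ≤
        (Yᵀ * (α • X + M * X * Matrix.diagonal dv)).trace) :
    (Yᵀ * M * Y * Matrix.diagonal dv).trace -
        (Xᵀ * M * X * Matrix.diagonal dv).trace ≥
      α * frobNorm (Y - X) ^ 2 :=
  gpm_sufficient_ascent_general M hM dv hdv α X Y hX hY hproj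
end

section
/- (Distance of optimizer to ground truth under perturbation) Let Q ∈ St(d,K), let g(X) = Σ_{k=1}^K a_k x_kᵀ (Q Θ² Qᵀ) x_k and h(X) = Σ_{k=1}^K x_kᵀ Δ_k x_k for symmetric matrices Δ_k, and let f = g + h. Suppose g satisfies global quadratic growth: g(Q) − g(X) ≥ η̄ d_F(X,Q)² for all X ∈ St(d,K) with η̄ > 0. If X̂ ∈ St(d,K) is a global maximizer of f over St(d,K), then d_F(X̂,Q) ≤ (2√K / η̄) · max_{k∈[K]} ‖Δ_k‖. -/
/-!
Choose the signs `q` realising `d_F(X̂, Q)` and put `Y = Q diag(q)`; `Y` has the same columns as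
`Q` up to sign, so `h Y = h Q`. Optimality `f Q ≤ f X̂` and quadratic growth give
`η d² ≤ g Q - g X̂ ≤ h X̂ - h Y`. Column by column,
`x̂ᵀ Δ x̂ - yᵀ Δ y = (x̂ - y)ᵀ Δ x̂ + yᵀ Δ (x̂ - y) ≤ 2 ‖Δ‖ ‖x̂ - y‖` for unit vectors, and
Cauchy–Schwarz turns the sum of the column distances into `√K ‖X̂ - Y‖_F = √K d`. Hence
`η d² ≤ 2 √K (max ‖Δ_k‖) d`.
-/

open Matrix

/-- Operator (spectral) norm of a real matrix. -/
noncomputable def opNorm {m n : ℕ} (A : Matrix (Fin m) (Fin n) ℝ) : ℝ :=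
  ‖LinearMap.toContinuousLinearMap (Matrix.toEuclideanLin A)‖

/-- `d_F(X,Q)`: minimum of `‖X − Q diag(q)‖_F` over sign vectors
`q ∈ {−1,1}^K`. -/
noncomputable def dF {d K : ℕ} (X Q : Matrix (Fin d) (Fin K) ℝ) : ℝ :=
  Finset.univ.inf' (Finset.univ_nonempty (α := Fin K → ℤˣ))
    fun q => frobNorm (X - Q * Matrix.diagonal fun k => ((q k : ℤ) : ℝ))

open Finset WithLp

lemma sum_le_sqrt_card_mul_sqrt_sum_sq {ι : Type*} (s : Finset ι) (f : ι → ℝ) :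
    ∑ i ∈ s, f i ≤ √(#s : ℝ) * √(∑ i ∈ s, f i ^ 2) := by
  rw [← Real.sqrt_mul (Nat.cast_nonneg _)]
  exact (le_abs_self _).trans (Real.abs_le_sqrt (sq_sum_le_card_mul_sum_sq ..))

lemma frobNorm_eq_sqrt_sum_norm_col_sq {m n : ℕ} (A : Matrix (Fin m) (Fin n) ℝ) :
    frobNorm A = √(∑ k, ‖toLp 2 (Aᵀ k)‖ ^ 2) := by
  simp only [frobNorm, EuclideanSpace.real_norm_sq_eq, transpose_apply]
  rw [Finset.sum_comm]

lemma frobNorm_nonneg {m n : ℕ} (A : Matrix (Fin m) (Fin n) ℝ) : 0 ≤ frobNorm A :=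
  Real.sqrt_nonneg _

lemma sum_norm_col_le_sqrt_mul_frobNorm {m n : ℕ} (A : Matrix (Fin m) (Fin n) ℝ) :
    ∑ k, ‖toLp 2 (Aᵀ k)‖ ≤ √n * frobNorm A := by
  simpa [frobNorm_eq_sqrt_sum_norm_col_sq] using
    sum_le_sqrt_card_mul_sqrt_sum_sq univ fun k => ‖toLp 2 (Aᵀ k)‖

lemma norm_col_eq_one_of_transpose_mul_self_eq_one {m n : ℕ} {X : Matrix (Fin m) (Fin n) ℝ}
    (hX : Xᵀ * X = 1) (k : Fin n) : ‖toLp 2 (Xᵀ k)‖ = 1 := by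
  have hkk := congrFun (congrFun hX k) k
  rw [mul_apply', one_apply_eq] at hkk
  have h : ‖toLp 2 (Xᵀ k)‖ ^ 2 = 1 := by
    rw [← real_inner_self_eq_norm_sq, EuclideanSpace.inner_toLp_toLp, star_trivial]
    exact hkk
  exact (pow_eq_one_iff_of_nonneg (norm_nonneg _) two_ne_zero).1 h

open scoped Matrix.Norms.L2Operator in
lemma dotProduct_mulVec_le_opNorm {m n : ℕ} (A : Matrix (Fin m) (Fin n) ℝ) (u : Fin m → ℝ)
    (v : Fin n → ℝ) : u ⬝ᵥ A *ᵥ v ≤ ‖toLp 2 u‖ * opNorm A * ‖toLp 2 v‖ :=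
  calc u ⬝ᵥ A *ᵥ v = inner ℝ (toLp 2 u) (toLp 2 (A *ᵥ v)) := by
        rw [EuclideanSpace.inner_toLp_toLp, star_trivial, dotProduct_comm]
    _ ≤ ‖toLp 2 u‖ * ‖toLp 2 (A *ᵥ v)‖ := real_inner_le_norm _ _
    _ ≤ ‖toLp 2 u‖ * (opNorm A * ‖toLp 2 v‖) := by
        gcongr; exact A.l2_opNorm_mulVec (toLp 2 v)
    _ = _ := by ring

lemma dotProduct_mulVec_self_sub_le {n : ℕ} (A : Matrix (Fin n) (Fin n) ℝ) {x y : Fin n → ℝ}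
    (hx : ‖toLp 2 x‖ ≤ 1) (hy : ‖toLp 2 y‖ ≤ 1) :
    x ⬝ᵥ A *ᵥ x - y ⬝ᵥ A *ᵥ y ≤ 2 * opNorm A * ‖toLp 2 (x - y)‖ := by
  have hsplit : x ⬝ᵥ A *ᵥ x - y ⬝ᵥ A *ᵥ y = (x - y) ⬝ᵥ A *ᵥ x + y ⬝ᵥ A *ᵥ (x - y) := by
    simp only [sub_dotProduct, mulVec_sub, dotProduct_sub]; ring
  have hA : 0 ≤ opNorm A := norm_nonneg _
  have hxy : 0 ≤ ‖toLp 2 (x - y)‖ := norm_nonneg _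
  rw [hsplit]
  nlinarith [dotProduct_mulVec_le_opNorm A (x - y) x, dotProduct_mulVec_le_opNorm A y (x - y),
    mul_nonneg hA hxy]

lemma sum_col_dotProduct_mulVec_sub_le {d K : ℕ} (Δ : Fin K → Matrix (Fin d) (Fin d) ℝ) {M : ℝ}
    (hM : ∀ k, opNorm (Δ k) ≤ M) (hM0 : 0 ≤ M) {X Y : Matrix (Fin d) (Fin K) ℝ}
    (hX : ∀ k, ‖toLp 2 (Xᵀ k)‖ ≤ 1) (hY : ∀ k, ‖toLp 2 (Yᵀ k)‖ ≤ 1) :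
    ∑ k, Xᵀ k ⬝ᵥ Δ k *ᵥ Xᵀ k - ∑ k, Yᵀ k ⬝ᵥ Δ k *ᵥ Yᵀ k ≤ 2 * √K * M * frobNorm (X - Y) :=
  calc ∑ k, Xᵀ k ⬝ᵥ Δ k *ᵥ Xᵀ k - ∑ k, Yᵀ k ⬝ᵥ Δ k *ᵥ Yᵀ k
      ≤ ∑ k, 2 * M * ‖toLp 2 (Xᵀ k - Yᵀ k)‖ := by
        rw [← sum_sub_distrib]
        refine sum_le_sum fun k _ => (dotProduct_mulVec_self_sub_le _ (hX k) (hY k)).trans ?_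
        gcongr
        exact hM k
    _ ≤ 2 * M * (√K * frobNorm (X - Y)) := by
        rw [← mul_sum]; gcongr; exact sum_norm_col_le_sqrt_mul_frobNorm (X - Y)
    _ = 2 * √K * M * frobNorm (X - Y) := by ring

lemma transpose_mul_diagonal_apply {m n : ℕ} (Q : Matrix (Fin m) (Fin n) ℝ) (s : Fin n → ℝ)
    (k : Fin n) : (Q * diagonal s)ᵀ k = s k • Qᵀ k := by
  ext i; simp [mul_comm]

lemma smul_dotProduct_mulVec_smul {n : ℕ} (A : Matrix (Fin n) (Fin n) ℝ) (c : ℝ)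
    (v : Fin n → ℝ) : (c • v) ⬝ᵥ A *ᵥ (c • v) = c ^ 2 * (v ⬝ᵥ A *ᵥ v) := by
  simp only [smul_dotProduct, mulVec_smul, dotProduct_smul, smul_eq_mul]; ring

lemma exists_dF_eq_frobNorm {d K : ℕ} (X Q : Matrix (Fin d) (Fin K) ℝ) :
    ∃ s : Fin K → ℝ, (∀ k, |s k| = 1) ∧ dF X Q = frobNorm (X - Q * diagonal s) := by
  obtain ⟨q, -, hq⟩ := exists_mem_eq_inf' (univ_nonempty (α := Fin K → ℤˣ))
    fun q => frobNorm (X - Q * diagonal fun k => ((q k : ℤ) : ℝ))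
  refine ⟨fun k => ((q k : ℤ) : ℝ), fun k => ?_, hq⟩
  rcases Int.units_eq_one_or (q k) with h | h <;> simp [h]

lemma le_div_of_mul_sq_le_mul {η D C : ℝ} (hη : 0 < η) (hD : 0 ≤ D) (hC : 0 ≤ C)
    (h : η * D ^ 2 ≤ C * D) : D ≤ C / η := by
  rw [le_div_iff₀ hη]
  rcases hD.eq_or_lt with rfl | hD
  · simpa using hC
  · nlinarith

theorem optimizer_distance_to_ground_truth_general {d K : ℕ} (hK : 0 < K)
    (Q : Matrix (Fin d) (Fin K) ℝ) (hQ : Qᵀ * Q = 1)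
    (Δ : Fin K → Matrix (Fin d) (Fin d) ℝ)
    (g h f : Matrix (Fin d) (Fin K) ℝ → ℝ)
    (hh : ∀ X, h X = ∑ k, (fun i => X i k) ⬝ᵥ (Δ k) *ᵥ fun i => X i k)
    (hf : ∀ X, f X = g X + h X)
    (ηbar : ℝ) (hηbar : 0 < ηbar)
    (hQG : ∀ X : Matrix (Fin d) (Fin K) ℝ, Xᵀ * X = 1 →
      g Q - g X ≥ ηbar * dF X Q ^ 2)
    (Xhat : Matrix (Fin d) (Fin K) ℝ) (hXhat : Xhatᵀ * Xhat = 1)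
    (hopt : ∀ X : Matrix (Fin d) (Fin K) ℝ, Xᵀ * X = 1 → f X ≤ f Xhat) :
    dF Xhat Q ≤ (2 * Real.sqrt K / ηbar) *
      Finset.univ.sup' ⟨⟨0, hK⟩, Finset.mem_univ _⟩ fun k => opNorm (Δ k) := by
  set M := univ.sup' ⟨⟨0, hK⟩, mem_univ _⟩ fun k => opNorm (Δ k)
  have hM : ∀ k, opNorm (Δ k) ≤ M := fun k => le_sup' (fun k => opNorm (Δ k)) (mem_univ k)
  have hM0 : 0 ≤ M := (norm_nonneg _).trans (hM ⟨0, hK⟩)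
  obtain ⟨s, hs, hdist⟩ := exists_dF_eq_frobNorm Xhat Q
  set Y := Q * diagonal s
  have hcolQ := norm_col_eq_one_of_transpose_mul_self_eq_one hQ
  have hhY : h Y = h Q := by
    simp only [hh]
    refine sum_congr rfl fun k _ => ?_
    rw [show (fun i => Y i k) = s k • Qᵀ k from transpose_mul_diagonal_apply Q s k,
      smul_dotProduct_mulVec_smul, ← sq_abs, hs, one_pow, one_mul]
    rfl
  have hcolY : ∀ k, ‖toLp 2 (Yᵀ k)‖ ≤ 1 := fun k => by
    rw [transpose_mul_diagonal_apply, toLp_smul, norm_smul, Real.norm_eq_abs, hs, hcolQ, one_mul]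
  have hgrowth : ηbar * dF Xhat Q ^ 2 ≤ 2 * √K * M * dF Xhat Q :=
    calc ηbar * dF Xhat Q ^ 2 ≤ g Q - g Xhat := hQG Xhat hXhat
      _ ≤ h Xhat - h Y := by linarith [hf Q, hf Xhat, hopt Q hQ]
      _ ≤ 2 * √K * M * dF Xhat Q := by
        rw [hh, hh, hdist]
        exact sum_col_dotProduct_mulVec_sub_le Δ hM hM0
          (fun k => (norm_col_eq_one_of_transpose_mul_self_eq_one hXhat k).le) hcolY
  rw [div_mul_eq_mul_div]
  exact le_div_of_mul_sq_le_mul hηbar (hdist ▸ frobNorm_nonneg _) (by positivity) hgrowth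

/-- Distance of a global maximizer of the perturbed problem `f = g + h` to the
ground truth `Q`, assuming global quadratic growth of the population part
`g`. -/
theorem optimizer_distance_to_ground_truth {d K : ℕ} (hK : 0 < K)
    (Q : Matrix (Fin d) (Fin K) ℝ) (hQ : Qᵀ * Q = 1)
    (lam a : Fin K → ℝ)
    (Δ : Fin K → Matrix (Fin d) (Fin d) ℝ) (hΔ : ∀ k, (Δ k)ᵀ = Δ k)
    (g h f : Matrix (Fin d) (Fin K) ℝ → ℝ)
    (hg : ∀ X, g X = ∑ k, a k *
      ((fun i => X i k) ⬝ᵥ (Q * Matrix.diagonal lam * Qᵀ) *ᵥ fun i => X i k))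
    (hh : ∀ X, h X = ∑ k, (fun i => X i k) ⬝ᵥ (Δ k) *ᵥ fun i => X i k)
    (hf : ∀ X, f X = g X + h X)
    (ηbar : ℝ) (hηbar : 0 < ηbar)
    (hQG : ∀ X : Matrix (Fin d) (Fin K) ℝ, Xᵀ * X = 1 →
      g Q - g X ≥ ηbar * dF X Q ^ 2)
    (Xhat : Matrix (Fin d) (Fin K) ℝ) (hXhat : Xhatᵀ * Xhat = 1)
    (hopt : ∀ X : Matrix (Fin d) (Fin K) ℝ, Xᵀ * X = 1 → f X ≤ f Xhat) :
    dF Xhat Q ≤ (2 * Real.sqrt K / ηbar) *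
      Finset.univ.sup' ⟨⟨0, hK⟩, Finset.mem_univ _⟩ fun k => opNorm (Δ k) :=
  optimizer_distance_to_ground_truth_general hK Q hQ Δ g h f hh hf ηbar hηbar hQG Xhat hXhat hopt
end
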